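/- arXiv:1612.08803 — 2 statements merged into one kernel-verified Lean document; each statement's English description precedes it below -/
import Mathlib

section
/- The Liouville transformation intertwines the Sturm-Liouville operator and the Schrödinger operator: for every v ∈ C²(A,B) ∩ C[A,B], B[L v] = L[C v], where B u = −u'' + Q u and C v = −(1/r)((p v')' − q v), with Q given by the Liouville transformation formula. -/
open Set

set_option maxHeartbeats 4000000 in
/-- The Liouville transformation intertwines the Sturm-Liouville operator
`C v = −(1/r)((p v')' − q v)` and the Schrödinger operator `B u = −u'' + Q u`:
for every `v ∈ C²(A,B) ∩ C[A,B]`, `B[L v] = L[C v]`, where `Q` is given by the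
Liouville transformation formula. -/
theorem liouville_transformation_intertwines
    (A B b : ℝ) (hAB : A < B)
    (p q r ρ l linv Q : ℝ → ℝ)
    (hq : ContinuousOn q (Icc A B))
    (hp1 : ContDiffOn ℝ 1 p (Icc A B)) (hr1 : ContDiffOn ℝ 1 r (Icc A B))
    (hpAC : ∀ y ∈ Icc A B, DifferentiableAt ℝ (deriv p) y)
    (hrAC : ∀ y ∈ Icc A B, DifferentiableAt ℝ (deriv r) y)
    (hppos : ∀ y ∈ Icc A B, 0 < p y) (hrpos : ∀ y ∈ Icc A B, 0 < r y)
    (hρ : ∀ y ∈ Icc A B, ρ y = (p y * r y) ^ ((1 : ℝ) / 4))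
    (hl : ∀ y ∈ Icc A B, l y = ∫ s in A..y, Real.sqrt (r s / p s))
    (hb : b = l B)
    (hlinvmaps : MapsTo linv (Icc 0 b) (Icc A B))
    (hli : ∀ y ∈ Icc A B, linv (l y) = y)
    (hir : ∀ x ∈ Icc 0 b, l (linv x) = x)
    -- the transformed potential
    (hQ : ∀ x ∈ Icc 0 b, Q x =
      q (linv x) / r (linv x) -
        (ρ (linv x) / r (linv x)) *
          deriv (fun s => p s * deriv (fun t => 1 / ρ t) s) (linv x)) :
    ∀ v : ℝ → ℝ, ContDiffOn ℝ 2 v (Ioo A B) → ContinuousOn v (Icc A B) →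
      ∀ x ∈ Ioo 0 b,
        -- B[L v](x)
        (-(deriv (deriv (fun x' => ρ (linv x') * v (linv x'))) x)
            + Q x * (ρ (linv x) * v (linv x)))
        =
        -- L[C v](x) = ρ(l⁻¹(x)) · (C v)(l⁻¹(x))
        ρ (linv x) *
          (-(1 / r (linv x)) *
            (deriv (fun y => p y * deriv v y) (linv x) - q (linv x) * v (linv x))) := by
  intro v hv2 hvc x₀ hx₀
  have hABle : A ≤ B := hAB.le
  -- continuity of the integrand
  have hfc : ContinuousOn (fun s => Real.sqrt (r s / p s)) (Icc A B) := by
    exact Real.continuous_sqrt.comp_continuousOn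
      ((hr1.continuousOn.div hp1.continuousOn (fun y hy => (hppos y hy).ne')))
  have hfpos : ∀ y ∈ Icc A B, 0 < Real.sqrt (r y / p y) := fun y hy =>
    Real.sqrt_pos.mpr (div_pos (hrpos y hy) (hppos y hy))
  -- continuity of l
  have hlc : ContinuousOn l (Icc A B) := by
    refine ContinuousOn.congr (intervalIntegral.continuousOn_primitive
      (f := fun s => Real.sqrt (r s / p s)) (μ := MeasureTheory.volume)
      (hfc.integrableOn_Icc)) ?_
    intro y hy
    rw [hl y hy]
    exact intervalIntegral.integral_of_le hy.1
  -- derivative of l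
  have hld : ∀ y ∈ Ioo A B, HasDerivAt l (Real.sqrt (r y / p y)) y := by
    intro y hy
    have hyI : y ∈ Icc A B := Ioo_subset_Icc_self hy
    have hint : IntervalIntegrable (fun s => Real.sqrt (r s / p s)) MeasureTheory.volume A y := by
      refine ContinuousOn.intervalIntegrable (hfc.mono ?_)
      rw [uIcc_of_le hy.1.le]
      exact Icc_subset_Icc le_rfl hy.2.le
    have hmeas := (hfc.mono Ioo_subset_Icc_self).stronglyMeasurableAtFilter
      (μ := MeasureTheory.volume) isOpen_Ioo y hy
    have hcont : ContinuousAt (fun s => Real.sqrt (r s / p s)) y :=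
      hfc.continuousAt (Icc_mem_nhds hy.1 hy.2)
    have H := intervalIntegral.integral_hasDerivAt_right hint hmeas hcont
    exact H.congr_of_eventuallyEq
      (by filter_upwards [Icc_mem_nhds hy.1 hy.2] with z hz using hl z hz)
  have hlA : l A = 0 := by
    rw [hl A (left_mem_Icc.mpr hABle), intervalIntegral.integral_same]
  -- strict monotonicity of l
  have hlsm : StrictMonoOn l (Icc A B) := by
    refine strictMonoOn_of_deriv_pos (convex_Icc A B) hlc ?_
    intro y hy
    rw [interior_Icc] at hy
    rw [(hld y hy).deriv]
    exact hfpos y (Ioo_subset_Icc_self hy)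
  have hl0 : ∀ y ∈ Icc A B, 0 ≤ l y := fun y hy => by
    rw [← hlA]; exact hlsm.monotoneOn (left_mem_Icc.mpr hABle) hy hy.1
  have hlb : ∀ y ∈ Icc A B, l y ≤ b := fun y hy => by
    rw [hb]; exact hlsm.monotoneOn hy (right_mem_Icc.mpr hABle) hy.2
  -- linv maps the open interval into the open interval
  have hmaps : ∀ x ∈ Ioo 0 b, linv x ∈ Ioo A B := by
    intro x hx
    have hxI : x ∈ Icc 0 b := Ioo_subset_Icc_self hx
    have h1 : linv x ∈ Icc A B := hlinvmaps hxI
    constructor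
    · rcases eq_or_lt_of_le h1.1 with h | h
      · exfalso
        have h2 := hir x hxI
        rw [← h, hlA] at h2
        exact hx.1.ne h2
      · exact h
    · rcases eq_or_lt_of_le h1.2 with h | h
      · exfalso
        have h2 := hir x hxI
        rw [h, ← hb] at h2
        exact hx.2.ne' h2
      · exact h
  -- continuity of linv on the open interval
  have hlinvc : ∀ x ∈ Ioo 0 b, ContinuousAt linv x := by
    intro x hx
    have hxI : x ∈ Icc 0 b := Ioo_subset_Icc_self hx
    have hy : linv x ∈ Ioo A B := hmaps x hx
    have hyI : linv x ∈ Icc A B := Ioo_subset_Icc_self hy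
    rw [Metric.continuousAt_iff]
    intro ε hε
    set y := linv x with hy_def
    set ε1 : ℝ := min (ε / 2) (min ((y - A) / 2) ((B - y) / 2)) with hε1_def
    have e0 : ε1 ≤ ε / 2 := min_le_left _ _
    have e1 : ε1 ≤ (y - A) / 2 := (min_le_right _ _).trans (min_le_left _ _)
    have e2 : ε1 ≤ (B - y) / 2 := (min_le_right _ _).trans (min_le_right _ _)
    have hε1pos : 0 < ε1 := by
      refine lt_min (by linarith) (lt_min (by linarith [hy.1]) (by linarith [hy.2]))
    have hy1 : y - ε1 ∈ Icc A B := ⟨by linarith [hy.1], by linarith [hy.2]⟩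
    have hy2 : y + ε1 ∈ Icc A B := ⟨by linarith [hy.1], by linarith [hy.2]⟩
    have hxy : l y = x := hir x hxI
    have hlow : l (y - ε1) < x := by
      rw [← hxy]; exact hlsm hy1 hyI (by linarith)
    have hhigh : x < l (y + ε1) := by
      rw [← hxy]; exact hlsm hyI hy2 (by linarith)
    refine ⟨min (x - l (y - ε1)) (l (y + ε1) - x),
      lt_min (by linarith) (by linarith), ?_⟩
    intro x' hx'
    rw [Real.dist_eq] at hx' ⊢
    have hd1 : |x' - x| < x - l (y - ε1) := lt_of_lt_of_le hx' (min_le_left _ _)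
    have hd2 : |x' - x| < l (y + ε1) - x := lt_of_lt_of_le hx' (min_le_right _ _)
    have hd1' := abs_lt.mp hd1
    have hd2' := abs_lt.mp hd2
    have hx'l : l (y - ε1) < x' := by linarith [hd1'.1]
    have hx'h : x' < l (y + ε1) := by linarith [hd2'.2]
    have hx'I : x' ∈ Icc 0 b := by
      constructor
      · linarith [hl0 (y - ε1) hy1]
      · linarith [hlb (y + ε1) hy2]
    have hyx' : linv x' ∈ Icc A B := hlinvmaps hx'I
    have h1 : y - ε1 < linv x' := by
      by_contra h
      push_neg at h
      have h2 := hlsm.monotoneOn hyx' hy1 h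
      rw [hir x' hx'I] at h2
      linarith
    have h2 : linv x' < y + ε1 := by
      by_contra h
      push_neg at h
      have h3 := hlsm.monotoneOn hy2 hyx' h
      rw [hir x' hx'I] at h3
      linarith
    rw [abs_lt]
    constructor <;> linarith
  -- derivative of linv
  have hlinvd : ∀ x ∈ Ioo 0 b, HasDerivAt linv (Real.sqrt (r (linv x) / p (linv x)))⁻¹ x := by
    intro x hx
    have hy : linv x ∈ Ioo A B := hmaps x hx
    exact HasDerivAt.of_local_left_inverse (hlinvc x hx) (hld _ hy)
      (hfpos _ (Ioo_subset_Icc_self hy)).ne'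
      (by filter_upwards [Ioo_mem_nhds hx.1 hx.2] with z hz using hir z (Ioo_subset_Icc_self hz))
  -- derivatives of p, r, v on the open interval
  have hpd : ∀ y ∈ Ioo A B, HasDerivAt p (deriv p y) y := fun y hy =>
    ((hp1.differentiableOn one_ne_zero y (Ioo_subset_Icc_self hy)).differentiableAt
      (Icc_mem_nhds hy.1 hy.2)).hasDerivAt
  have hrd : ∀ y ∈ Ioo A B, HasDerivAt r (deriv r y) y := fun y hy =>
    ((hr1.differentiableOn one_ne_zero y (Ioo_subset_Icc_self hy)).differentiableAt
      (Icc_mem_nhds hy.1 hy.2)).hasDerivAt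
  have hvd : ∀ y ∈ Ioo A B, HasDerivAt v (deriv v y) y := fun y hy =>
    ((hv2.differentiableOn (by norm_num) y hy).differentiableAt
      (isOpen_Ioo.mem_nhds hy)).hasDerivAt
  have hv1 : ContDiffOn ℝ 1 (deriv v) (Ioo A B) :=
    hv2.deriv_of_isOpen isOpen_Ioo (by norm_num)
  -- derivative of ρ
  have hρd : ∀ y ∈ Ioo A B, HasDerivAt ρ
      ((deriv p y * r y + p y * deriv r y) * ((1:ℝ)/4) * (p y * r y) ^ ((1:ℝ)/4 - 1)) y := by
    intro y hy
    have hyI : y ∈ Icc A B := Ioo_subset_Icc_self hy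
    have h1 : HasDerivAt (fun t => p t * r t) (deriv p y * r y + p y * deriv r y) y :=
      (hpd y hy).mul (hrd y hy)
    have h2 := h1.rpow_const (p := (1:ℝ)/4)
      (Or.inl (mul_pos (hppos y hyI) (hrpos y hyI)).ne')
    exact h2.congr_of_eventuallyEq
      (by filter_upwards [Icc_mem_nhds hy.1 hy.2] with z hz using hρ z hz)
  -- derivative of 1/ρ
  have h1ρd : ∀ y ∈ Ioo A B, HasDerivAt (fun t => 1 / ρ t)
      (-((deriv p y * r y + p y * deriv r y) * ((1:ℝ)/4) * (p y * r y) ^ ((1:ℝ)/4 - 1)) /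
        ρ y ^ 2) y := by
    intro y hy
    have hyI : y ∈ Icc A B := Ioo_subset_Icc_self hy
    have hne : ρ y ≠ 0 := by
      rw [hρ y hyI]
      exact (Real.rpow_pos_of_pos (mul_pos (hppos y hyI) (hrpos y hyI)) _).ne'
    have h1 := (hρd y hy).inv hne
    simpa only [one_div, Pi.inv_def] using h1
  have hψeq : ∀ z ∈ Ioo A B, deriv (fun t => 1 / ρ t) z =
      -((deriv p z * r z + p z * deriv r z) * ((1:ℝ)/4) * (p z * r z) ^ ((1:ℝ)/4 - 1)) /
        ((p z * r z) ^ ((1:ℝ)/4)) ^ 2 := by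
    intro z hz
    rw [(h1ρd z hz).deriv, hρ z (Ioo_subset_Icc_self hz)]
  -- the point
  have hx₀I : x₀ ∈ Icc 0 b := Ioo_subset_Icc_self hx₀
  have hy₀m : linv x₀ ∈ Ioo A B := hmaps x₀ hx₀
  have hy₀I : linv x₀ ∈ Icc A B := Ioo_subset_Icc_self hy₀m
  have hP : 0 < p (linv x₀) := hppos _ hy₀I
  have hR : 0 < r (linv x₀) := hrpos _ hy₀I
  have hPR : 0 < p (linv x₀) * r (linv x₀) := mul_pos hP hR
  have hne : p (linv x₀) * r (linv x₀) ≠ 0 := hPR.ne'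
  -- second derivatives of p, r at the point
  have hpdd : HasDerivAt (deriv p) (deriv (deriv p) (linv x₀)) (linv x₀) :=
    (hpAC _ hy₀I).hasDerivAt
  have hrdd : HasDerivAt (deriv r) (deriv (deriv r) (linv x₀)) (linv x₀) :=
    (hrAC _ hy₀I).hasDerivAt
  have hvdd : HasDerivAt (deriv v) (deriv (deriv v) (linv x₀)) (linv x₀) :=
    ((hv1.differentiableOn one_ne_zero _ hy₀m).differentiableAt
      (isOpen_Ioo.mem_nhds hy₀m)).hasDerivAt
  -- building blocks at the point
  have hPf : HasDerivAt (fun s => p s * r s)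
      (deriv p (linv x₀) * r (linv x₀) + p (linv x₀) * deriv r (linv x₀)) (linv x₀) :=
    (hpd _ hy₀m).mul (hrd _ hy₀m)
  have hMd : HasDerivAt (fun s => deriv p s * r s + p s * deriv r s)
      (deriv (deriv p) (linv x₀) * r (linv x₀) + deriv p (linv x₀) * deriv r (linv x₀) +
        (deriv p (linv x₀) * deriv r (linv x₀) + p (linv x₀) * deriv (deriv r) (linv x₀)))
      (linv x₀) :=
    (hpdd.mul (hrd _ hy₀m)).add ((hpd _ hy₀m).mul hrdd)
  have hA1 := hPf.rpow_const (p := (1:ℝ)/4 - 1) (Or.inl hne)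
  have hρ'd := (hMd.mul_const ((1:ℝ)/4)).mul hA1
  have hρed := hPf.rpow_const (p := (1:ℝ)/4) (Or.inl hne)
  -- derivative of p * (1/ρ)' at the point
  have hψd := (hρ'd.neg).div (hρed.pow 2)
    (pow_ne_zero 2 (Real.rpow_pos_of_pos hPR _).ne')
  have h5 := (hpd _ hy₀m).mul hψd
  have hgev : (fun s => p s * deriv (fun t => 1 / ρ t) s) =ᶠ[nhds (linv x₀)]
      (fun s => p s *
        (-((deriv p s * r s + p s * deriv r s) * ((1:ℝ)/4) * (p s * r s) ^ ((1:ℝ)/4 - 1)) /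
          ((p s * r s) ^ ((1:ℝ)/4)) ^ 2)) := by
    filter_upwards [Ioo_mem_nhds hy₀m.1 hy₀m.2] with z hz
    simp only [hψeq z hz]
  have hgd := h5.congr_of_eventuallyEq hgev
  have hgval : deriv (fun s => p s * deriv (fun t => 1 / ρ t) s) (linv x₀) = _ := hgd.deriv
  -- first derivative of the transformed function L v
  have hFd : ∀ x ∈ Ioo 0 b, HasDerivAt (fun x' => ρ (linv x') * v (linv x'))
      (((deriv p (linv x) * r (linv x) + p (linv x) * deriv r (linv x)) * ((1:ℝ)/4) *
          (p (linv x) * r (linv x)) ^ ((1:ℝ)/4 - 1) * v (linv x) +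
        (p (linv x) * r (linv x)) ^ ((1:ℝ)/4) * deriv v (linv x)) *
        (Real.sqrt (r (linv x) / p (linv x)))⁻¹) x := by
    intro x hx
    have hy : linv x ∈ Ioo A B := hmaps x hx
    have hyI : linv x ∈ Icc A B := Ioo_subset_Icc_self hy
    have h1 := (hρd _ hy).mul (hvd _ hy)
    rw [hρ _ hyI] at h1
    exact h1.comp (x := x) (hlinvd x hx)
  have hevF : deriv (fun x' => ρ (linv x') * v (linv x')) =ᶠ[nhds x₀]
      (fun x => ((deriv p (linv x) * r (linv x) + p (linv x) * deriv r (linv x)) * ((1:ℝ)/4) *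
          (p (linv x) * r (linv x)) ^ ((1:ℝ)/4 - 1) * v (linv x) +
        (p (linv x) * r (linv x)) ^ ((1:ℝ)/4) * deriv v (linv x)) *
        (Real.sqrt (r (linv x) / p (linv x)))⁻¹) := by
    filter_upwards [Ioo_mem_nhds hx₀.1 hx₀.2] with x hx using (hFd x hx).deriv
  -- second derivative of L v at the point
  have hsum := (hρ'd.mul (hvd _ hy₀m)).add (hρed.mul hvdd)
  have hfd := ((hrd _ hy₀m).div (hpd _ hy₀m) hP.ne').sqrt
    (div_ne_zero hR.ne' hP.ne')
  have hfinv := hfd.inv (hfpos _ hy₀I).ne'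
  have hKd := hsum.mul hfinv
  have hKd' := hKd.comp (x := x₀) (hlinvd x₀ hx₀)
  have hD2 : deriv (fun x => ((deriv p (linv x) * r (linv x) + p (linv x) * deriv r (linv x)) * ((1:ℝ)/4) *
          (p (linv x) * r (linv x)) ^ ((1:ℝ)/4 - 1) * v (linv x) +
        (p (linv x) * r (linv x)) ^ ((1:ℝ)/4) * deriv v (linv x)) *
        (Real.sqrt (r (linv x) / p (linv x)))⁻¹) x₀ = _ := hKd'.deriv
  -- derivative of p v' at the point
  have hpv : deriv (fun y => p y * deriv v y) (linv x₀) = _ :=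
    ((hpd _ hy₀m).mul hvdd).deriv
  -- now assemble
  rw [hevF.deriv_eq, hD2, hQ x₀ hx₀I, hgval, hpv, hρ _ hy₀I]
  simp only [Pi.mul_apply, Pi.add_apply, Pi.sub_apply, Pi.pow_apply, Pi.inv_apply, Pi.neg_apply, Pi.div_apply]
  -- pure algebra from here on
  set P := p (linv x₀) with hP_def
  set R := r (linv x₀) with hR_def
  set P1 := deriv p (linv x₀)
  set R1 := deriv r (linv x₀)
  set P2 := deriv (deriv p) (linv x₀)
  set R2 := deriv (deriv r) (linv x₀)
  set V := v (linv x₀)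
  set V1 := deriv v (linv x₀)
  set V2 := deriv (deriv v) (linv x₀)
  have ha : (P * R) ^ ((1:ℝ)/4 - 1) = (P * R) ^ ((1:ℝ)/4) / (P * R) := by
    rw [Real.rpow_sub hPR, Real.rpow_one]
  have ha2 : (P * R) ^ ((1:ℝ)/4 - 1 - 1) = (P * R) ^ ((1:ℝ)/4) / (P * R) / (P * R) := by
    rw [Real.rpow_sub hPR, Real.rpow_one, ha]
  rw [ha, ha2]
  have hcpos : 0 < (P * R) ^ ((1:ℝ)/4) := Real.rpow_pos_of_pos hPR _
  set c := (P * R) ^ ((1:ℝ)/4) with hc_def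
  have hwpos : 0 < Real.sqrt (R / P) := Real.sqrt_pos.mpr (div_pos hR hP)
  set w := Real.sqrt (R / P) with hw_def
  have hR_eq : R = w ^ 2 * P := by
    rw [hw_def, Real.sq_sqrt (div_pos hR hP).le]
    field_simp
  rw [hR_eq]
  field_simp
  ring
end

section
/- Under the Liouville transformation, the formal powers associated with the Sturm-Liouville equation map to the formal powers of the transformed Schrödinger equation: ρ(y)Φ_n(y) = φ_n(l(y)) and Ψ_n(y)/ρ(y) = ψ_n(l(y)) for all n ≥ 0. -/
open Set

/-- The recursive integrals `X⁽ⁿ⁾` associated with a non-vanishing solution `f`: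
`X⁽⁰⁾ ≡ 1`, `X⁽ⁿ⁾(x) = n ∫_0^x X⁽ⁿ⁻¹⁾(s) (f²(s))^{(−1)ⁿ} ds`. -/
noncomputable def recX (f : ℝ → ℂ) : ℕ → ℝ → ℂ
  | 0 => fun _ => 1
  | n + 1 => fun x =>
      (n + 1 : ℂ) * ∫ s in (0 : ℝ)..x, recX f n s * (f s ^ 2) ^ ((-1 : ℤ) ^ (n + 1))

/-- The recursive integrals `X̃⁽ⁿ⁾` : same with exponent `(−1)^{n−1}`. -/
noncomputable def recXt (f : ℝ → ℂ) : ℕ → ℝ → ℂ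
  | 0 => fun _ => 1
  | n + 1 => fun x =>
      (n + 1 : ℂ) * ∫ s in (0 : ℝ)..x, recXt f n s * (f s ^ 2) ^ ((-1 : ℤ) ^ n)

/-- The recursive integrals `Y⁽ⁿ⁾` associated with the Sturm-Liouville equation:
`Y⁽⁰⁾ ≡ 1`, `Y⁽ⁿ⁾(y) = n ∫_A^y Y⁽ⁿ⁻¹⁾/(g² p)` for `n` odd,
`n ∫_A^y Y⁽ⁿ⁻¹⁾ g² r` for `n` even. -/
noncomputable def recY (A : ℝ) (g : ℝ → ℂ) (p r : ℝ → ℝ) : ℕ → ℝ → ℂ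
  | 0 => fun _ => 1
  | n + 1 => fun y =>
      if (n + 1) % 2 = 1 then
        (n + 1 : ℂ) * ∫ s in A..y, recY A g p r n s / (g s ^ 2 * (p s : ℂ))
      else
        (n + 1 : ℂ) * ∫ s in A..y, recY A g p r n s * (g s ^ 2 * (r s : ℂ))

/-- `Ỹ⁽ⁿ⁾` : same with parities swapped. -/
noncomputable def recYt (A : ℝ) (g : ℝ → ℂ) (p r : ℝ → ℝ) : ℕ → ℝ → ℂ
  | 0 => fun _ => 1
  | n + 1 => fun y =>
      if (n + 1) % 2 = 1 then
        (n + 1 : ℂ) * ∫ s in A..y, recYt A g p r n s * (g s ^ 2 * (r s : ℂ))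
      else
        (n + 1 : ℂ) * ∫ s in A..y, recYt A g p r n s / (g s ^ 2 * (p s : ℂ))

/-- Formal powers `φ_k` for the Schrödinger equation. -/
noncomputable def formalPhiSmall (f : ℝ → ℂ) (k : ℕ) (x : ℝ) : ℂ :=
  if k % 2 = 1 then f x * recX f k x else f x * recXt f k x

/-- Formal powers `ψ_k` for the Schrödinger equation. -/
noncomputable def formalPsiSmall (f : ℝ → ℂ) (k : ℕ) (x : ℝ) : ℂ :=
  if k % 2 = 1 then recXt f k x / f x else recX f k x / f x

/-- Formal powers `Φ_k` for the Sturm-Liouville equation. -/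
noncomputable def formalPhiBig (A : ℝ) (g : ℝ → ℂ) (p r : ℝ → ℝ) (k : ℕ) (y : ℝ) : ℂ :=
  if k % 2 = 1 then g y * recY A g p r k y else g y * recYt A g p r k y

/-- Formal powers `Ψ_k` for the Sturm-Liouville equation. -/
noncomputable def formalPsiBig (A : ℝ) (g : ℝ → ℂ) (p r : ℝ → ℝ) (k : ℕ) (y : ℝ) : ℂ :=
  if k % 2 = 0 then recY A g p r k y / g y else recYt A g p r k y / g y


lemma sqrtfact1 {p r : ℝ} (hp : 0 < p) (hr : 0 < r) :
    ((p * r) ^ ((1:ℝ)/4)) ^ 2 = Real.sqrt (r / p) * p := by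
  have hpr : (0:ℝ) ≤ p * r := by positivity
  rw [← Real.rpow_natCast ((p*r) ^ ((1:ℝ)/4)) 2, ← Real.rpow_mul hpr]
  norm_num
  rw [← Real.sqrt_eq_rpow, show Real.sqrt (r/p) * p = Real.sqrt (r/p) * Real.sqrt (p^2) by
    rw [Real.sqrt_sq hp.le], ← Real.sqrt_mul (by positivity) (p^2)]
  congr 1
  field_simp

lemma sqrtfact2 {p r : ℝ} (hp : 0 < p) (hr : 0 < r) :
    Real.sqrt (r / p) * ((p * r) ^ ((1:ℝ)/4)) ^ 2 = r := by
  rw [sqrtfact1 hp hr, ← mul_assoc, ← Real.sqrt_mul (by positivity)]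
  rw [show r / p * (r / p) = (r/p)^2 by ring, Real.sqrt_sq (by positivity)]
  field_simp

/-- Under the Liouville transformation the formal powers associated with the
Sturm-Liouville equation map to those of the transformed Schrödinger equation:
`ρ(y) Φ_n(y) = φ_n(l(y))` and `Ψ_n(y)/ρ(y) = ψ_n(l(y))` for all `n ≥ 0`. -/
theorem liouville_transforms_formal_powers
    (A B b : ℝ) (hAB : A < B)
    (p q r ρ l linv : ℝ → ℝ)
    (hq : ContinuousOn q (Icc A B))
    (hp1 : ContDiffOn ℝ 1 p (Icc A B)) (hr1 : ContDiffOn ℝ 1 r (Icc A B))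
    (hppos : ∀ y ∈ Icc A B, 0 < p y) (hrpos : ∀ y ∈ Icc A B, 0 < r y)
    (hρ : ∀ y ∈ Icc A B, ρ y = (p y * r y) ^ ((1 : ℝ) / 4))
    (hl : ∀ y ∈ Icc A B, l y = ∫ s in A..y, Real.sqrt (r s / p s))
    (hb : b = l B)
    (hlinvmaps : MapsTo linv (Icc 0 b) (Icc A B))
    (hli : ∀ y ∈ Icc A B, linv (l y) = y)
    (hir : ∀ x ∈ Icc 0 b, l (linv x) = x)
    (g : ℝ → ℂ) (hg0 : ∀ y ∈ Icc A B, g y ≠ 0)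
    (hgC1 : ∀ y ∈ Icc A B, DifferentiableAt ℝ g y)
    -- g is a solution of (p g')' − q g = 0 on [A,B]
    (hgsol : ∀ y ∈ Icc A B,
      deriv (fun y' => (p y' : ℂ) * deriv g y') y - (q y : ℂ) * g y = 0)
    -- f is obtained from g via the Liouville transformation
    (f : ℝ → ℂ) (hf : ∀ x ∈ Icc 0 b, f x = (ρ (linv x) : ℂ) * g (linv x)) :
    ∀ (n : ℕ), ∀ y ∈ Icc A B,
      (ρ y : ℂ) * formalPhiBig A g p r n y = formalPhiSmall f n (l y) ∧
      formalPsiBig A g p r n y / (ρ y : ℂ) = formalPsiSmall f n (l y) := by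

  have hABle : A ≤ B := hAB.le
  have hpc : ContinuousOn p (Icc A B) := hp1.continuousOn
  have hrc : ContinuousOn r (Icc A B) := hr1.continuousOn
  have hgc : ContinuousOn g (Icc A B) := fun y hy => (hgC1 y hy).continuousAt.continuousWithinAt
  have hρc : ContinuousOn ρ (Icc A B) :=
    ((hpc.mul hrc).rpow_const fun x _ => Or.inr (by norm_num)).congr fun y hy => hρ y hy
  have hρpos : ∀ y ∈ Icc A B, 0 < ρ y := fun y hy => by
    rw [hρ y hy]; exact Real.rpow_pos_of_pos (mul_pos (hppos y hy) (hrpos y hy)) _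
  set w : ℝ → ℝ := fun s => Real.sqrt (r s / p s) with hwdef
  have hwc : ContinuousOn w (Icc A B) :=
    (hrc.div hpc fun y hy => (hppos y hy).ne').sqrt
  have hwpos : ∀ s ∈ Icc A B, 0 < w s := fun s hs =>
    Real.sqrt_pos.mpr (div_pos (hrpos s hs) (hppos s hs))
  have hwii : ∀ a' y', A ≤ a' → a' ≤ y' → y' ≤ B →
      IntervalIntegrable w MeasureTheory.volume a' y' := by
    intro a' y' h1 h2 h3
    rw [intervalIntegrable_iff_integrableOn_Icc_of_le h2]
    exact (hwc.mono (Icc_subset_Icc h1 h3)).integrableOn_Icc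
  have hlA : l A = 0 := by
    rw [hl A (left_mem_Icc.mpr hABle), intervalIntegral.integral_same]
  have hlmaps : ∀ y ∈ Icc A B, l y ∈ Icc 0 b := by
    intro y hy
    have h1 : 0 ≤ ∫ s in A..y, w s :=
      intervalIntegral.integral_nonneg hy.1 fun u _ => Real.sqrt_nonneg _
    have h2 : 0 ≤ ∫ s in y..B, w s :=
      intervalIntegral.integral_nonneg hy.2 fun u _ => Real.sqrt_nonneg _
    have hadd := intervalIntegral.integral_add_adjacent_intervals
      (hwii A y le_rfl hy.1 hy.2) (hwii y B hy.1 hy.2 le_rfl)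
    constructor
    · rw [hl y hy]; exact h1
    · rw [hb, hl y hy, hl B (right_mem_Icc.mpr hABle), ← hadd]; linarith
  have h0b : (0:ℝ) ≤ b := by
    have := (hlmaps A (left_mem_Icc.mpr hABle)).2
    rwa [hlA] at this
  have hLcont : ContinuousOn (fun y => ∫ s in A..y, w s) (Icc A B) := by
    have : MeasureTheory.IntegrableOn w (uIcc A B) := by
      rw [uIcc_of_le hABle]; exact hwc.integrableOn_Icc
    simpa [uIcc_of_le hABle] using intervalIntegral.continuousOn_primitive_interval this
  have hlcont : ContinuousOn l (Icc A B) := hLcont.congr fun y hy => hl y hy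
  have hld : ∀ x ∈ Ioo A B, HasDerivWithinAt l (w x) (Ioi x) x := by
    intro x hx
    have hwcOo : ContinuousOn w (Ioo A B) := hwc.mono Ioo_subset_Icc_self
    have hL : HasDerivAt (fun u => ∫ s in A..u, w s) (w x) x :=
      intervalIntegral.integral_hasDerivAt_right (hwii A x le_rfl hx.1.le hx.2.le)
        (hwcOo.stronglyMeasurableAtFilter isOpen_Ioo x hx)
        (hwcOo.continuousAt (isOpen_Ioo.mem_nhds hx))
    refine hL.hasDerivWithinAt.congr_of_eventuallyEq ?_ (hl x (Ioo_subset_Icc_self hx))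
    filter_upwards [Ioo_mem_nhdsGT_of_mem (⟨le_refl x, hx.2⟩ : x ∈ Ico x B)] with t ht
    exact hl t ⟨(hx.1.trans ht.1).le, ht.2.le⟩
  have hlinvcont : ContinuousOn linv (Icc 0 b) := by
    have hcompact : CompactSpace (Icc A B) := isCompact_iff_compactSpace.mp isCompact_Icc
    have hce : Continuous (fun y : Icc A B => (⟨l y, hlmaps y y.2⟩ : Icc 0 b)) :=
      (continuousOn_iff_continuous_restrict.mp hlcont).subtype_mk _
    rw [continuousOn_iff_continuous_restrict]
    exact (Continuous.continuous_symm_of_equiv_compact_to_t2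
      (f := ⟨fun y => ⟨l y, hlmaps y y.2⟩, fun x => ⟨linv x, hlinvmaps x.2⟩,
        fun y => Subtype.ext (hli y y.2), fun x => Subtype.ext (hir x x.2)⟩)
      hce).subtype_val
  have hpcC : ContinuousOn (fun s => (p s : ℂ)) (Icc A B) :=
    Complex.continuous_ofReal.comp_continuousOn hpc
  have hrcC : ContinuousOn (fun s => (r s : ℂ)) (Icc A B) :=
    Complex.continuous_ofReal.comp_continuousOn hrc
  have hρcC : ContinuousOn (fun s => (ρ s : ℂ)) (Icc A B) :=
    Complex.continuous_ofReal.comp_continuousOn hρc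
  have hden1 : ContinuousOn (fun s => g s ^ 2 * (p s : ℂ)) (Icc A B) := (hgc.pow 2).mul hpcC
  have hden1ne : ∀ s ∈ Icc A B, g s ^ 2 * (p s : ℂ) ≠ 0 := fun s hs =>
    mul_ne_zero (pow_ne_zero _ (hg0 s hs)) (by exact_mod_cast (hppos s hs).ne')
  have hmul2 : ContinuousOn (fun s => g s ^ 2 * (r s : ℂ)) (Icc A B) := (hgc.pow 2).mul hrcC
  have primcont : ∀ F : ℝ → ℂ, ContinuousOn F (Icc A B) →
      ContinuousOn (fun y => ∫ s in A..y, F s) (Icc A B) := by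
    intro F hF
    have : MeasureTheory.IntegrableOn F (uIcc A B) := by
      rw [uIcc_of_le hABle]; exact hF.integrableOn_Icc
    simpa [uIcc_of_le hABle] using intervalIntegral.continuousOn_primitive_interval this
  have contY : ∀ n : ℕ, ContinuousOn (recY A g p r n) (Icc A B) ∧
      ContinuousOn (recYt A g p r n) (Icc A B) := by
    intro n
    induction n with
    | zero => exact ⟨continuousOn_const, continuousOn_const⟩
    | succ n ih =>
      constructor
      · by_cases hpar : (n+1) % 2 = 1
        · simp only [recY, if_pos hpar]
          exact continuousOn_const.mul (primcont _ (ih.1.div hden1 hden1ne))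
        · simp only [recY, if_neg hpar]
          exact continuousOn_const.mul (primcont _ (ih.1.mul hmul2))
      · by_cases hpar : (n+1) % 2 = 1
        · simp only [recYt, if_pos hpar]
          exact continuousOn_const.mul (primcont _ (ih.2.mul hmul2))
        · simp only [recYt, if_neg hpar]
          exact continuousOn_const.mul (primcont _ (ih.2.div hden1 hden1ne))
  have hfval : ∀ s ∈ Icc A B, f (l s) = (ρ s : ℂ) * g s := fun s hs => by
    rw [hf _ (hlmaps s hs), hli s hs]
  have cov : ∀ G : ℝ → ℂ, ContinuousOn G (Icc 0 b) → ∀ y ∈ Icc A B,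
      (∫ x in (0:ℝ)..(l y), G x) = ∫ s in A..y, w s • G (l s) := by
    intro G hG y hy
    have h1 : uIcc A y = Icc A y := uIcc_of_le hy.1
    have hsub : Icc A y ⊆ Icc A B := Icc_subset_Icc le_rfl hy.2
    have himg : l '' uIcc A y ⊆ Icc 0 b := by
      rw [h1]; rintro x ⟨s, hs, rfl⟩; exact hlmaps s (hsub hs)
    have key := intervalIntegral.integral_comp_smul_deriv'' (f := l) (f' := w) (g := G)
      (hlcont.mono (h1 ▸ hsub))
      (by
        intro x hx
        rw [min_eq_left hy.1, max_eq_right hy.1] at hx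
        exact hld x ⟨hx.1, hx.2.trans_le hy.2⟩)
      (hwc.mono (h1 ▸ hsub)) (hG.mono himg)
    rw [hlA] at key
    exact key.symm
  have master : ∀ F H : ℝ → ℂ, ContinuousOn H (Icc A B) →
      (∀ s ∈ Icc A B, F (l s) = H s) → ∀ y ∈ Icc A B,
      ((∫ x in (0:ℝ)..(l y), F x * (f x ^ 2) ^ (-1 : ℤ)) =
        ∫ s in A..y, H s / (g s ^ 2 * (p s : ℂ))) ∧
      ((∫ x in (0:ℝ)..(l y), F x * (f x ^ 2) ^ (1 : ℤ)) =
        ∫ s in A..y, H s * (g s ^ 2 * (r s : ℂ))) := by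
    intro F H hH hFH y hy
    have hFx : ∀ x ∈ Icc 0 b, F x = H (linv x) := fun x hx => by
      conv_lhs => rw [← hir x hx]
      exact hFH _ (hlinvmaps hx)
    have hfx : ∀ x ∈ Icc 0 b, f x = (ρ (linv x) : ℂ) * g (linv x) := fun x hx => hf x hx
    have hHl : ContinuousOn (fun x => H (linv x)) (Icc 0 b) := hH.comp hlinvcont hlinvmaps
    have hρgl : ContinuousOn (fun x => ((ρ (linv x) : ℂ) * g (linv x)) ^ 2) (Icc 0 b) :=
      ((hρcC.comp hlinvcont hlinvmaps).mul (hgc.comp hlinvcont hlinvmaps)).pow 2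
    have hρgne : ∀ x ∈ Icc 0 b, ((ρ (linv x) : ℂ) * g (linv x)) ^ 2 ≠ 0 := fun x hx =>
      pow_ne_zero _ (mul_ne_zero (by exact_mod_cast (hρpos _ (hlinvmaps hx)).ne')
        (hg0 _ (hlinvmaps hx)))
    constructor
    · have hGc : ContinuousOn (fun x => F x * (f x ^ 2) ^ (-1 : ℤ)) (Icc 0 b) := by
        refine (hHl.mul (hρgl.inv₀ hρgne)).congr fun x hx => ?_
        rw [hFx x hx, hfx x hx, zpow_neg, zpow_one]
        rfl
      rw [cov _ hGc y hy]
      refine intervalIntegral.integral_congr fun s hs => ?_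
      have hs' : s ∈ Icc A B := Icc_subset_Icc le_rfl hy.2 (uIcc_of_le hy.1 ▸ hs)
      have hρ2 : ((ρ s : ℂ)) ^ 2 = (w s : ℂ) * (p s : ℂ) := by
        have h := sqrtfact1 (hppos s hs') (hrpos s hs')
        rw [hρ s hs']
        exact_mod_cast h
      rw [hFH s hs', hfval s hs', zpow_neg, zpow_one, Complex.real_smul, mul_pow, hρ2]
      have hgne : g s ≠ 0 := hg0 s hs'
      have hpne : (p s : ℂ) ≠ 0 := by exact_mod_cast (hppos s hs').ne'
      have hwne : (w s : ℂ) ≠ 0 := by exact_mod_cast (hwpos s hs').ne'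
      field_simp
    · have hGc : ContinuousOn (fun x => F x * (f x ^ 2) ^ (1 : ℤ)) (Icc 0 b) := by
        refine (hHl.mul hρgl).congr fun x hx => ?_
        rw [hFx x hx, hfx x hx, zpow_one]
        rfl
      rw [cov _ hGc y hy]
      refine intervalIntegral.integral_congr fun s hs => ?_
      have hs' : s ∈ Icc A B := Icc_subset_Icc le_rfl hy.2 (uIcc_of_le hy.1 ▸ hs)
      have hwρ2 : (w s : ℂ) * ((ρ s : ℂ)) ^ 2 = (r s : ℂ) := by
        have h := sqrtfact2 (hppos s hs') (hrpos s hs')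
        rw [hρ s hs']
        exact_mod_cast h
      rw [hFH s hs', hfval s hs', zpow_one, Complex.real_smul, mul_pow]
      linear_combination (H s * g s ^ 2) * hwρ2
  have key : ∀ n : ℕ, ∀ y ∈ Icc A B,
      recX f n (l y) = recY A g p r n y ∧ recXt f n (l y) = recYt A g p r n y := by
    intro n
    induction n with
    | zero => intro y hy; exact ⟨rfl, rfl⟩
    | succ n ih =>
      intro y hy
      have ih1 : ∀ s ∈ Icc A B, recX f n (l s) = recY A g p r n s := fun s hs => (ih s hs).1
      have ih2 : ∀ s ∈ Icc A B, recXt f n (l s) = recYt A g p r n s := fun s hs => (ih s hs).2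
      constructor
      · by_cases hpar : (n+1) % 2 = 1
        · have hexp : ((-1 : ℤ)) ^ (n+1) = -1 := Odd.neg_one_pow (Nat.odd_iff.mpr hpar)
          simp only [recX, recY, hexp, if_pos hpar]
          rw [(master _ _ (contY n).1 ih1 y hy).1]
        · have hexp : ((-1 : ℤ)) ^ (n+1) = 1 := Even.neg_one_pow (Nat.even_iff.mpr (by omega))
          simp only [recX, recY, hexp, if_neg hpar]
          rw [(master _ _ (contY n).1 ih1 y hy).2]
      · by_cases hpar : (n+1) % 2 = 1
        · have hexp : ((-1 : ℤ)) ^ n = 1 := Even.neg_one_pow (Nat.even_iff.mpr (by omega))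
          simp only [recXt, recYt, hexp, if_pos hpar]
          rw [(master _ _ (contY n).2 ih2 y hy).2]
        · have hexp : ((-1 : ℤ)) ^ n = -1 := Odd.neg_one_pow (Nat.odd_iff.mpr (by omega))
          simp only [recXt, recYt, hexp, if_neg hpar]
          rw [(master _ _ (contY n).2 ih2 y hy).1]
  intro n y hy
  have h1 := (key n y hy).1
  have h2 := (key n y hy).2
  have hfy := hfval y hy
  unfold formalPhiBig formalPhiSmall formalPsiBig formalPsiSmall
  by_cases hpar : n % 2 = 1
  · rw [if_pos hpar, if_pos hpar, if_neg (by omega : ¬ n % 2 = 0), if_pos hpar]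
    constructor
    · rw [h1, hfy]; ring
    · rw [h2, hfy]; ring
  · rw [if_neg hpar, if_neg hpar, if_pos (by omega : n % 2 = 0), if_neg hpar]
    constructor
    · rw [h2, hfy]; ring
    · rw [h1, hfy]; ring
end
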